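/- If k·e^{-2s/N} ≥ 8 k^{0.99} (equivalently s ≤ (0.005)·N ln k with appropriate constants), then for sufficiently large N, the probability that at most one coupon of a fixed k-subset remains undrawn after s uniform draws with replacement from N coupons is at most e^{-k^{0.99}}. -/

import Mathlib

/-!
If at most one coupon of `S` is missed, then for some `j ∈ S` all of `S \ {j}` is drawn, so by a
union bound it suffices to bound the probability that `t` given coupons are all drawn. By
inclusion–exclusion this probability is `∑ u, (-1)^u C(t,u) (1 - u/N)^s`; conditioning on the
first draw gives a recursion in `(s, t)`, and induction on `s` bounds it by
`(1 - (1 - 1/N)^s)^t`, its value if the coupons were covered independently (negative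
correlation). Hence the probability is at most `k exp(-(k-1)(1-1/N)^s) ≤ k exp(-(k-1)e^{-2s/N})`,
which the hypothesis `k e^{-2s/N} ≥ 8 k^0.99` and `log k ≤ 2 k^0.99` bound by `e^{-k^0.99}`.
-/

open MeasureTheory ProbabilityTheory Filter Finset

lemma pow_succ_add_mul_le_add_pow_succ {R : Type*} [CommRing R] [PartialOrder R]
    [IsOrderedRing R] {a d : R} (ha : 0 ≤ a) (hd : 0 ≤ d) (t : ℕ) :
    a ^ (t + 1) + (t + 1) * a ^ t * d ≤ (a + d) ^ (t + 1) := by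
  induction t with
  | zero => simp
  | succ t ih =>
    have ht : (0 : R) ≤ t + 1 := add_nonneg t.cast_nonneg zero_le_one
    have hsq : 0 ≤ ((t : R) + 1) * a ^ t * d * d :=
      mul_nonneg (mul_nonneg (mul_nonneg ht (pow_nonneg ha t)) hd) hd
    push_cast
    calc a ^ (t + 1 + 1) + ((t : R) + 1 + 1) * a ^ (t + 1) * d
        ≤ (a + d) * (a ^ (t + 1) + (t + 1) * a ^ t * d) := by
          linear_combination hsq
      _ ≤ (a + d) * (a + d) ^ (t + 1) := by gcongr
      _ = (a + d) ^ (t + 2) := by ring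

noncomputable def allDrawnProb (n m t : ℕ) : ℝ :=
  ∑ u ∈ range (t + 1), (-1) ^ u * t.choose u * (1 - u / n) ^ m

lemma allDrawnProb_succ_succ (n m t : ℕ) :
    allDrawnProb n (m + 1) (t + 1) =
      (1 - (t + 1) / n) * allDrawnProb n m (t + 1) + (t + 1) / n * allDrawnProb n m t := by
  have hchoose (u : ℕ) (hu : u ≤ t + 1) :
      ((t + 1 : ℝ) - u) * (t + 1).choose u = (t + 1) * t.choose u := by
    rw [← Nat.cast_add_one, ← Nat.cast_sub hu, mul_comm, mul_comm _ (t.choose u : ℝ)]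
    exact_mod_cast (Nat.choose_mul_succ_eq t u).symm
  have htop : ∑ u ∈ range (t + 2), (-1 : ℝ) ^ u * t.choose u * (1 - u / n) ^ m =
      allDrawnProb n m t := by
    simp [sum_range_succ _ (t + 1), allDrawnProb]
  rw [← htop, allDrawnProb, allDrawnProb, mul_sum, mul_sum, ← sum_add_distrib]
  refine sum_congr rfl fun u hu => ?_
  rw [pow_succ]
  have hu : u ≤ t + 1 := Nat.lt_succ_iff.1 (mem_range.1 hu)
  linear_combination (-1 : ℝ) ^ u * (1 - u / n) ^ m / n * hchoose u hu

lemma allDrawnProb_zero_right (n t : ℕ) (ht : t ≠ 0) : allDrawnProb n 0 t = 0 := by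
  simpa [allDrawnProb] using
    congrArg (Int.cast : ℤ → ℝ) (Int.alternating_sum_range_choose_of_ne ht)

lemma allDrawnProb_le (n m t : ℕ) (ht : t ≤ n) :
    allDrawnProb n m t ≤ (1 - (1 - 1 / n : ℝ) ^ m) ^ t := by
  induction m generalizing t with
  | zero =>
    rcases eq_or_ne t 0 with rfl | ht0
    · simp [allDrawnProb]
    · simp [allDrawnProb_zero_right n t ht0, zero_pow ht0]
  | succ m ih =>
    cases t with
    | zero => simp [allDrawnProb]
    | succ t =>
      set a := 1 - (1 - 1 / n : ℝ) ^ m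
      have hn : (0 : ℝ) < n := by exact_mod_cast (show 0 < n by omega)
      have hq0 : 0 ≤ (1 - 1 / n : ℝ) := by
        rw [sub_nonneg, div_le_one hn]; exact_mod_cast (show 1 ≤ n by omega)
      have ha : 0 ≤ a := sub_nonneg.2 (pow_le_one₀ hq0 (by simp))
      have hc : 0 ≤ 1 - ((t : ℝ) + 1) / n := by
        rw [sub_nonneg, div_le_one hn]; exact_mod_cast ht
      calc allDrawnProb n (m + 1) (t + 1)
          ≤ (1 - (t + 1) / n) * a ^ (t + 1) + (t + 1) / n * a ^ t := by
            rw [allDrawnProb_succ_succ]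
            gcongr
            exacts [ih _ ht, ih _ (by omega)]
        _ = a ^ (t + 1) + (t + 1) * a ^ t * ((1 - 1 / n) ^ m / n) := by ring
        _ ≤ (a + (1 - 1 / n) ^ m / n) ^ (t + 1) :=
            pow_succ_add_mul_le_add_pow_succ ha (by positivity) t
        _ = (1 - (1 - 1 / n : ℝ) ^ (m + 1)) ^ (t + 1) := by ring

lemma Finset.exists_forall_mem_erase_not_of_card_filter_le_one {α : Type*} [DecidableEq α]
    {s : Finset α} {p : α → Prop} [DecidablePred p] (hs : s.Nonempty)
    (h : #(s.filter p) ≤ 1) :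
    ∃ a ∈ s, ∀ b ∈ s.erase a, ¬ p b := by
  by_cases hp : ∃ a ∈ s, p a
  · obtain ⟨a, ha, hpa⟩ := hp
    refine ⟨a, ha, fun b hb hpb => (mem_erase.1 hb).1 ?_⟩
    exact card_le_one.1 h b (mem_filter.2 ⟨mem_of_mem_erase hb, hpb⟩) a
      (mem_filter.2 ⟨ha, hpa⟩)
  · push Not at hp
    obtain ⟨a, ha⟩ := hs
    exact ⟨a, ha, fun b hb => hp b (mem_of_mem_erase hb)⟩

section Draws

variable {Ω : Type*} [MeasurableSpace Ω] {μ : Measure Ω} [IsProbabilityMeasure μ]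
  {m n : ℕ} {D : Fin m → Ω → Fin n}

lemma measureReal_forall_notMem (hmeas : ∀ i, Measurable (D i))
    (hunif : ∀ i j, μ.real {ω | D i ω = j} = 1 / n) (hind : iIndepFun D μ)
    (U : Finset (Fin n)) :
    μ.real {ω | ∀ i, D i ω ∉ U} = (1 - #U / n) ^ m := by
  have hhit (i : Fin m) : μ.real (D i ⁻¹' U) = #U / n := by
    rw [← sum_measureReal_preimage_singleton U fun j _ => hmeas i (.singleton j)]
    simp [Set.preimage, hunif, div_eq_mul_inv]
  have hset : {ω | ∀ i, D i ω ∉ U} = ⋂ i ∈ univ, D i ⁻¹' (↑U)ᶜ := by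
    ext ω; simp
  rw [hset, measureReal_def,
    hind.measure_inter_preimage_eq_mul _ (sets := fun _ => (↑U)ᶜ) fun _ _ => .of_discrete,
    ENNReal.toReal_prod]
  simp_rw [← measureReal_def, Set.preimage_compl,
    probReal_compl_eq_one_sub (hmeas _ .of_discrete), hhit]
  simp

lemma measureReal_forall_exists_eq (hmeas : ∀ i, Measurable (D i))
    (hunif : ∀ i j, μ.real {ω | D i ω = j} = 1 / n) (hind : iIndepFun D μ)
    (T : Finset (Fin n)) :
    μ.real {ω | ∀ j ∈ T, ∃ i, D i ω = j} = allDrawnProb n m #T := by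
  classical
  set missed : Fin n → Set Ω := fun j => {ω | ∀ i, D i ω ≠ j}
  have hmissed (j : Fin n) : MeasurableSet (missed j) := by
    simp only [missed, Set.ofPred_forall]
    exact .iInter fun i => hmeas i (measurableSet_singleton j).compl
  have hinter (U : Finset (Fin n)) : ⋂ j ∈ U, missed j = {ω | ∀ i, D i ω ∉ U} := by
    ext ω; simp only [missed, Set.mem_iInter, Set.mem_ofPred_eq]; grind
  have hcompl : {ω | ∀ j ∈ T, ∃ i, D i ω = j} = (⋃ j ∈ T, missed j)ᶜ := by
    ext ω; simp [missed]
  let f : ℕ → ℝ := fun u => (-1) ^ u * (1 - u / n) ^ m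
  calc μ.real {ω | ∀ j ∈ T, ∃ i, D i ω = j}
      = 1 - ∑ U ∈ T.powerset with U.Nonempty, (-1 : ℝ) ^ (#U + 1) * (1 - #U / n) ^ m := by
        rw [hcompl, probReal_compl_eq_one_sub (T.measurableSet_biUnion fun j _ => hmissed j),
          measureReal_biUnion_eq_sum_powerset fun j _ => hmissed j]
        simp_rw [hinter, measureReal_forall_notMem hmeas hunif hind]
    _ = ∑ U ∈ T.powerset, f #U := by
        rw [← sum_filter_add_sum_filter_not T.powerset (fun U => U.Nonempty)]
        simp [f, pow_succ, Finset.not_nonempty_iff_eq_empty, filter_eq', sub_eq_add_neg, add_comm]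
    _ = allDrawnProb n m #T := by
        rw [sum_powerset_apply_card, allDrawnProb]
        refine sum_congr rfl fun u _ => ?_
        simp only [f, nsmul_eq_mul]; ring

lemma measureReal_forall_exists_eq_le (hmeas : ∀ i, Measurable (D i))
    (hunif : ∀ i j, μ.real {ω | D i ω = j} = 1 / n) (hind : iIndepFun D μ)
    (T : Finset (Fin n)) :
    μ.real {ω | ∀ j ∈ T, ∃ i, D i ω = j} ≤ (1 - (1 - 1 / n : ℝ) ^ m) ^ #T := by
  rw [measureReal_forall_exists_eq hmeas hunif hind]
  exact allDrawnProb_le n m #T (by simpa using T.card_le_univ)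

lemma measureReal_card_filter_missed_le_one_le {S : Finset (Fin n)} (hS : S.Nonempty)
    (hmeas : ∀ i, Measurable (D i))
    (hunif : ∀ i j, μ.real {ω | D i ω = j} = 1 / n) (hind : iIndepFun D μ) :
    μ.real {ω | #(S.filter fun j => ∀ i, D i ω ≠ j) ≤ 1} ≤
      #S * (1 - (1 - 1 / n : ℝ) ^ m) ^ (#S - 1) := by
  have hsub : {ω | #(S.filter fun j => ∀ i, D i ω ≠ j) ≤ 1} ⊆
      ⋃ j ∈ S, {ω | ∀ j' ∈ S.erase j, ∃ i, D i ω = j'} := by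
    intro ω hω
    obtain ⟨j, hj, hdrawn⟩ := exists_forall_mem_erase_not_of_card_filter_le_one hS hω
    simp only [not_forall, not_not] at hdrawn
    exact Set.mem_biUnion hj hdrawn
  calc μ.real {ω | #(S.filter fun j => ∀ i, D i ω ≠ j) ≤ 1}
      ≤ ∑ j ∈ S, μ.real {ω | ∀ j' ∈ S.erase j, ∃ i, D i ω = j'} :=
        (measureReal_mono hsub (measure_ne_top μ _)).trans (measureReal_biUnion_finset_le _ _)
    _ ≤ ∑ j ∈ S, (1 - (1 - 1 / n : ℝ) ^ m) ^ (#S - 1) := by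
        refine sum_le_sum fun j hj => ?_
        rw [← card_erase_of_mem hj]
        exact measureReal_forall_exists_eq_le hmeas hunif hind _
    _ = #S * (1 - (1 - 1 / n : ℝ) ^ m) ^ (#S - 1) := by simp

end Draws

section Estimates

open Real

lemma exp_neg_two_mul_le_one_sub {y : ℝ} (hy0 : 0 ≤ y) (hy : y ≤ 1 / 2) :
    exp (-(2 * y)) ≤ 1 - y := by
  have hpos : 0 < 1 + 2 * y := by linarith
  calc exp (-(2 * y)) = (exp (2 * y))⁻¹ := exp_neg _
    _ ≤ (1 + 2 * y)⁻¹ := inv_anti₀ hpos (by linarith [add_one_le_exp (2 * y)])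
    _ ≤ 1 - y := by
      rw [inv_le_iff_one_le_mul₀' hpos]
      nlinarith

lemma exp_neg_two_mul_div_le_one_sub_one_div_pow {N : ℕ} (hN : 2 ≤ N) (s : ℕ) :
    exp (-2 * s / N) ≤ (1 - 1 / N : ℝ) ^ s := by
  have hN' : (2 : ℝ) ≤ N := by exact_mod_cast hN
  calc exp (-2 * s / N) = exp (-(2 * (1 / N))) ^ s := by
        rw [← exp_nat_mul]; ring_nf
    _ ≤ (1 - 1 / N : ℝ) ^ s := by
        gcongr
        exact exp_neg_two_mul_le_one_sub (by positivity)
          (one_div_le_one_div_of_le two_pos hN')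

lemma one_sub_pow_le_exp_neg_mul {p : ℝ} (hp : p ≤ 1) (n : ℕ) :
    (1 - p) ^ n ≤ exp (-(n * p)) := by
  rw [← mul_neg, exp_nat_mul]
  exact pow_le_pow_left₀ (by linarith) (one_sub_le_exp_neg p) n

lemma mul_exp_neg_le_exp_neg_rpow {k x : ℝ} (hk : 1 ≤ k) (hx : x ≤ 1)
    (h : 8 * k ^ (0.99 : ℝ) ≤ k * x) :
    k * exp (-((k - 1) * x)) ≤ exp (-k ^ (0.99 : ℝ)) := by
  have hpow : 1 ≤ k ^ (0.99 : ℝ) := one_le_rpow hk (by norm_num)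
  have hlog : log k ≤ 2 * k ^ (0.99 : ℝ) := by
    have hle := log_le_rpow_div (x := k) (by linarith) (show (0 : ℝ) < 0.99 by norm_num)
    have hdiv : k ^ (0.99 : ℝ) / 0.99 ≤ 2 * k ^ (0.99 : ℝ) := by
      rw [div_le_iff₀ (by norm_num)]; linarith
    linarith
  calc k * exp (-((k - 1) * x)) = exp (log k - (k - 1) * x) := by
        rw [exp_sub, exp_log (by linarith), exp_neg, div_eq_mul_inv]
    -- `log k - (k - 1) x ≤ 2 k^0.99 - (k x - 1) ≤ 2 k^0.99 - 8 k^0.99 + 1 ≤ -k^0.99`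
    _ ≤ exp (-k ^ (0.99 : ℝ)) := exp_le_exp.2 (by nlinarith)

end Estimates

theorem at_most_one_missed_coupon_general
    (k s : ℕ → ℕ)
    (Ω : ℕ → Type*) [∀ N, MeasurableSpace (Ω N)]
    (μ : ∀ N, Measure (Ω N)) [∀ N, IsProbabilityMeasure (μ N)]
    (D : ∀ N, Fin (s N) → Ω N → Fin N)
    (hmeas : ∀ N i, Measurable (D N i))
    (hunif : ∀ N, 0 < N → ∀ i j, ((μ N) {ω | D N i ω = j}).toReal = 1 / N)
    (hind : ∀ N, iIndepFun (D N) (μ N))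
    (S : ∀ N, Finset (Fin N)) (hS : ∀ N, (S N).card = k N)
    (hlb : ∀ᶠ N in atTop,
      8 * (k N : ℝ) ^ (0.99 : ℝ) ≤ (k N : ℝ) * Real.exp (-2 * s N / N)) :
    ∀ᶠ N in atTop,
      ((μ N) {ω | ((S N).filter (fun j => ∀ i, D N i ω ≠ j)).card ≤ 1}).toReal
        ≤ Real.exp (-(k N : ℝ) ^ (0.99 : ℝ)) := by
  filter_upwards [hlb, eventually_ge_atTop 2] with N hlbN hN
  rw [← hS N] at hlbN ⊢
  rcases (S N).eq_empty_or_nonempty with hempty | hne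
  · rw [hempty, card_empty, Nat.cast_zero, Real.zero_rpow (by norm_num), neg_zero, Real.exp_zero]
    exact measureReal_le_one
  set x := Real.exp (-2 * s N / N)
  set q := (1 - 1 / N : ℝ) ^ s N
  have hxq : x ≤ q := exp_neg_two_mul_div_le_one_sub_one_div_pow hN (s N)
  have hq : q ≤ 1 :=
    pow_le_one₀ (sub_nonneg.2 (div_le_one_of_le₀ (by norm_cast; omega) N.cast_nonneg)) (by simp)
  have hk : (1 : ℝ) ≤ #(S N) := by exact_mod_cast hne.card_pos
  calc ((μ N) _).toReal ≤ #(S N) * (1 - q) ^ (#(S N) - 1) :=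
        measureReal_card_filter_missed_le_one_le hne (hmeas N) (hunif N (by omega)) (hind N)
    _ ≤ #(S N) * Real.exp (-((#(S N) - 1 : ℕ) * q)) := by
        gcongr; exact one_sub_pow_le_exp_neg_mul hq _
    _ ≤ #(S N) * Real.exp (-(((#(S N) : ℝ) - 1) * x)) := by
        rw [Nat.cast_pred hne.card_pos]; gcongr
    _ ≤ Real.exp (-(#(S N) : ℝ) ^ (0.99 : ℝ)) :=
        mul_exp_neg_le_exp_neg_rpow hk (hxq.trans hq) hlbN

/-- Coupon collector with `N` coupons, a fixed subset `S(N)` of size `k(N) → ∞`,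
and `s(N)` independent uniform draws with replacement. If
`k e^{-2s/N} ≥ 8 k^{0.99}`, then for `N` large enough the probability that at
most one coupon of `S(N)` remains undrawn is at most `e^{-k^{0.99}}`. -/
theorem at_most_one_missed_coupon
    (k s : ℕ → ℕ) (hk : Tendsto k atTop atTop)
    (Ω : ℕ → Type*) [∀ N, MeasurableSpace (Ω N)]
    (μ : ∀ N, Measure (Ω N)) [∀ N, IsProbabilityMeasure (μ N)]
    (D : ∀ N, Fin (s N) → Ω N → Fin N)
    (hmeas : ∀ N i, Measurable (D N i))
    (hunif : ∀ N, 0 < N → ∀ i j, ((μ N) {ω | D N i ω = j}).toReal = 1 / N)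
    (hind : ∀ N, iIndepFun (D N) (μ N))
    (S : ∀ N, Finset (Fin N)) (hS : ∀ N, (S N).card = k N)
    (hlb : ∀ᶠ N in atTop,
      8 * (k N : ℝ) ^ (0.99 : ℝ) ≤ (k N : ℝ) * Real.exp (-2 * s N / N)) :
    ∀ᶠ N in atTop,
      ((μ N) {ω | ((S N).filter (fun j => ∀ i, D N i ω ≠ j)).card ≤ 1}).toReal
        ≤ Real.exp (-(k N : ℝ) ^ (0.99 : ℝ)) :=
  at_most_one_missed_coupon_general k s Ω μ D hmeas hunif hind S hS hlb
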